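/- arXiv:2507.12165 — 4 statements merged into one kernel-verified Lean document; each statement's English description precedes it below -/
import Mathlib

section
/- A block matrix Σ that is block strictly diagonally dominant with respect to an operator norm (i.e., ‖Σ_{i,i}^{-1}‖^{-1} > ∑_{k≠i}‖Σ_{i,k}‖ for all i, with each Σ_{i,i} invertible) is nonsingular. -/
/-!
Let `S v = 0` and split `v` into blocks `v_k`. Choose `i` with `‖v_i‖` maximal. The `i`-th block
row gives `Σ_{i,i} v_i = -∑_{k ≠ i} Σ_{i,k} v_k`, hence
`‖v_i‖ ≤ ‖Σ_{i,i}⁻¹‖ ∑_{k ≠ i} ‖Σ_{i,k}‖ ‖v_k‖ ≤ ‖Σ_{i,i}⁻¹‖ (∑_{k ≠ i} ‖Σ_{i,k}‖) ‖v_i‖`, and by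
strict block diagonal dominance the factor in front of `‖v_i‖` is `< 1`. So `v_i = 0`, and then
every block vanishes by maximality.
-/

open Matrix Finset MeasureTheory Real

noncomputable def specNorm {d : ℕ} (A : Matrix (Fin d) (Fin d) ℝ) : ℝ :=
  ‖(Matrix.toEuclideanLin A).toContinuousLinearMap‖

noncomputable def specNormC {d : ℕ} (A : Matrix (Fin d) (Fin d) ℂ) : ℝ :=
  ‖(Matrix.toEuclideanLin A).toContinuousLinearMap‖

/-- The `(i,j)` block of a blocked matrix. -/
def blk {𝕜 : Type*} {n d : ℕ} (S : Matrix (Fin n × Fin d) (Fin n × Fin d) 𝕜) (i j : Fin n) :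
    Matrix (Fin d) (Fin d) 𝕜 := fun a b => S (i, a) (j, b)

/-- Smallest real eigenvalue (as the infimum of the real spectrum). -/
noncomputable def lamMin {m : Type*} [Fintype m] [DecidableEq m]
    (A : Matrix m m ℝ) : ℝ := sInf (spectrum ℝ A)

/-- Smallest real eigenvalue of a complex matrix. -/
noncomputable def lamMinC {m : Type*} [Fintype m] [DecidableEq m]
    (A : Matrix m m ℂ) : ℝ := sInf {x : ℝ | (x : ℂ) ∈ spectrum ℂ A}

section BlockDiagDominant

variable {ι 𝕜 E F : Type*} [Fintype ι] [DecidableEq ι] [NontriviallyNormedField 𝕜]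
  [NormedAddCommGroup E] [NormedSpace 𝕜 E] [SeminormedAddCommGroup F] [NormedSpace 𝕜 F]

theorem norm_diag_apply_le_of_sum_eq_zero (T : ι → ι → E →L[𝕜] F) {x : ι → E} {i : ι}
    (hx : ∑ k, T i k (x k) = 0) :
    ‖T i i (x i)‖ ≤ ∑ k ∈ univ \ {i}, ‖T i k‖ * ‖x k‖ := by
  rw [sum_eq_sum_sdiff_singleton_add (mem_univ i)] at hx
  calc ‖T i i (x i)‖ = ‖∑ k ∈ univ \ {i}, T i k (x k)‖ := by
        rw [eq_neg_of_add_eq_zero_right hx, norm_neg]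
    _ ≤ ∑ k ∈ univ \ {i}, ‖T i k (x k)‖ := norm_sum_le _ _
    _ ≤ ∑ k ∈ univ \ {i}, ‖T i k‖ * ‖x k‖ := sum_le_sum fun k _ ↦ (T i k).le_opNorm (x k)

-- `c i` plays the role of `‖(T i i)⁻¹‖`.
theorem eq_zero_of_blockDiagDominant (T : ι → ι → E →L[𝕜] F) (c : ι → ℝ)
    (hlow : ∀ i y, ‖y‖ ≤ c i * ‖T i i y‖)
    (hdom : ∀ i, ∑ k ∈ univ \ {i}, ‖T i k‖ < (c i)⁻¹)
    {x : ι → E} (hx : ∀ i, ∑ k, T i k (x k) = 0) : x = 0 := by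
  cases isEmpty_or_nonempty ι
  · exact Subsingleton.elim _ _
  obtain ⟨i, -, hmax⟩ := exists_max_image univ (fun k ↦ ‖x k‖) univ_nonempty
  have hc : 0 < c i :=
    inv_pos.mp ((sum_nonneg fun k _ ↦ norm_nonneg (T i k)).trans_lt (hdom i))
  have hcs : c i * ∑ k ∈ univ \ {i}, ‖T i k‖ < 1 := by
    simpa [hc.ne'] using mul_lt_mul_of_pos_left (hdom i) hc
  have key : ‖x i‖ ≤ c i * (∑ k ∈ univ \ {i}, ‖T i k‖) * ‖x i‖ :=
    calc ‖x i‖ ≤ c i * ‖T i i (x i)‖ := hlow i (x i)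
      _ ≤ c i * ∑ k ∈ univ \ {i}, ‖T i k‖ * ‖x k‖ :=
        mul_le_mul_of_nonneg_left (norm_diag_apply_le_of_sum_eq_zero T (hx i)) hc.le
      _ ≤ c i * ∑ k ∈ univ \ {i}, ‖T i k‖ * ‖x i‖ := by
        gcongr with k
        exact hmax k (mem_univ k)
      _ = c i * (∑ k ∈ univ \ {i}, ‖T i k‖) * ‖x i‖ := by rw [← sum_mul, mul_assoc]
  have hxi : ‖x i‖ = 0 := by nlinarith [norm_nonneg (x i)]
  funext k
  exact norm_le_zero_iff.mp (hxi ▸ hmax k (mem_univ k))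

end BlockDiagDominant

theorem specNorm_eq_norm_toEuclideanCLM {d : ℕ} (A : Matrix (Fin d) (Fin d) ℝ) :
    specNorm A = ‖toEuclideanCLM (𝕜 := ℝ) A‖ :=
  rfl

theorem norm_le_specNorm_inv_mul {d : ℕ} {A : Matrix (Fin d) (Fin d) ℝ} (hA : IsUnit A)
    (y : EuclideanSpace ℝ (Fin d)) :
    ‖y‖ ≤ specNorm A⁻¹ * ‖toEuclideanCLM (𝕜 := ℝ) A y‖ := by
  have hy : toEuclideanCLM (𝕜 := ℝ) A⁻¹ (toEuclideanCLM (𝕜 := ℝ) A y) = y := by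
    change (toEuclideanCLM (𝕜 := ℝ) A⁻¹ * toEuclideanCLM (𝕜 := ℝ) A) y = y
    rw [← map_mul, nonsing_inv_mul _ ((isUnit_iff_isUnit_det A).mp hA), map_one]
    rfl
  calc ‖y‖ = ‖toEuclideanCLM (𝕜 := ℝ) A⁻¹ (toEuclideanCLM (𝕜 := ℝ) A y)‖ := by rw [hy]
    _ ≤ specNorm A⁻¹ * ‖toEuclideanCLM (𝕜 := ℝ) A y‖ := by
      rw [specNorm_eq_norm_toEuclideanCLM]
      exact ContinuousLinearMap.le_opNorm _ _

theorem sum_toEuclideanCLM_blk {𝕜 : Type*} [RCLike 𝕜] {n d : ℕ}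
    (S : Matrix (Fin n × Fin d) (Fin n × Fin d) 𝕜) (v : Fin n × Fin d → 𝕜) (i : Fin n) :
    ∑ k, toEuclideanCLM (𝕜 := 𝕜) (blk S i k) (WithLp.toLp 2 fun b ↦ v (k, b)) =
      WithLp.toLp 2 fun a ↦ (S *ᵥ v) (i, a) := by
  ext a
  simp [toEuclideanCLM_toLp, mulVec, dotProduct, Fintype.sum_prod_type, blk]

/-- a block strictly diagonally dominant block matrix (w.r.t. the
spectral operator norm, with invertible diagonal blocks) is nonsingular. -/
theorem stmt1 {n d : ℕ} (S : Matrix (Fin n × Fin d) (Fin n × Fin d) ℝ)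
    (hinv : ∀ i, IsUnit (blk S i i))
    (hdom : ∀ i, ∑ k ∈ univ \ {i}, specNorm (blk S i k) < (specNorm (blk S i i)⁻¹)⁻¹) :
    IsUnit S := by
  refine mulVec_injective_iff_isUnit.mp ?_
  rw [← coe_mulVecLin, injective_iff_map_eq_zero]
  intro v hv
  have hblocks : (fun k ↦ WithLp.toLp 2 fun b ↦ v (k, b) : Fin n → EuclideanSpace ℝ (Fin d)) = 0 :=
    eq_zero_of_blockDiagDominant (fun i k ↦ toEuclideanCLM (𝕜 := ℝ) (blk S i k))
      (fun i ↦ specNorm (blk S i i)⁻¹) (fun i ↦ norm_le_specNorm_inv_mul (hinv i))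
      (fun i ↦ by simpa only [specNorm_eq_norm_toEuclideanCLM] using hdom i)
      fun i ↦ by rw [sum_toEuclideanCLM_blk, show S *ᵥ v = 0 from hv]; rfl
  funext ⟨k, b⟩
  exact congrArg (fun w ↦ w b) (congrFun hblocks k)
end

section
/- For any eigenvalue λ of a block matrix Σ (with square diagonal blocks), there exists at least one block index i such that ‖(Σ_{i,i} − λI)^{-1}‖^{-1} ≤ ∑_{k≠i} ‖Σ_{i,k}‖, where if Σ_{i,i} − λI is singular the left-hand side is interpreted as 0. -/
/-! A block version of Gershgorin's argument: take an eigenvector `v` and a block index `i` at which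
the Euclidean norm of the block `vᵢ` is maximal. The `i`-th block row of `S v = λ v` reads
`(Sᵢᵢ - λ) vᵢ = -∑_{k ≠ i} Sᵢₖ vₖ`, whose right side has norm at most `(∑_{k ≠ i} ‖Sᵢₖ‖) ‖vᵢ‖`,
while `‖vᵢ‖ ≤ ‖(Sᵢᵢ - λ)⁻¹‖ ‖(Sᵢᵢ - λ) vᵢ‖`.
When `Sᵢᵢ - λ` is singular its Mathlib inverse is `0` and the bound holds trivially. -/

open Matrix Finset MeasureTheory Real

def blkVec {𝕜 : Type*} {n d : ℕ} (v : Fin n × Fin d → 𝕜) (k : Fin n) : Fin d → 𝕜 :=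
  fun a => v (k, a)

lemma blkVec_ne_zero_of_ne_zero {𝕜 : Type*} [Zero 𝕜] {n d : ℕ} {v : Fin n × Fin d → 𝕜}
    (hv : v ≠ 0) : ∃ k, blkVec v k ≠ 0 := by
  obtain ⟨⟨k, a⟩, hka⟩ := Function.ne_iff.mp hv
  exact ⟨k, fun h => hka (congrFun h a)⟩

lemma sum_blk_mulVec_blkVec {𝕜 : Type*} [NonUnitalNonAssocSemiring 𝕜] {n d : ℕ}
    (S : Matrix (Fin n × Fin d) (Fin n × Fin d) 𝕜) (v : Fin n × Fin d → 𝕜) (i : Fin n) :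
    ∑ k, blk S i k *ᵥ blkVec v k = blkVec (S *ᵥ v) i := by
  ext a
  simp only [Finset.sum_apply, mulVec, dotProduct, Fintype.sum_prod_type, blk, blkVec]

lemma blk_sub_smul_one_mulVec_of_mulVec_eq_smul {𝕜 : Type*} [CommRing 𝕜] {n d : ℕ}
    {S : Matrix (Fin n × Fin d) (Fin n × Fin d) 𝕜} {lam : 𝕜} {v : Fin n × Fin d → 𝕜}
    (hv : S *ᵥ v = lam • v) (i : Fin n) :
    (blk S i i - lam • 1) *ᵥ blkVec v i = -∑ k ∈ univ \ {i}, blk S i k *ᵥ blkVec v k := by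
  have hrow := sum_blk_mulVec_blkVec S v i
  rw [hv, ← Finset.sum_sdiff (Finset.subset_univ {i}), Finset.sum_singleton] at hrow
  have hlam : blkVec (lam • v) i = lam • blkVec v i := rfl
  rw [sub_mulVec, smul_mulVec, one_mulVec, ← hlam, ← hrow]
  abel

lemma norm_toLp_mulVec_le_specNormC {d : ℕ} (A : Matrix (Fin d) (Fin d) ℂ) (x : Fin d → ℂ) :
    ‖WithLp.toLp 2 (A *ᵥ x)‖ ≤ specNormC A * ‖WithLp.toLp 2 x‖ :=
  (toEuclideanLin A).toContinuousLinearMap.le_opNorm (WithLp.toLp 2 x)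

lemma norm_toLp_sum_mulVec_le {d : ℕ} {ι : Type*} (s : Finset ι) (B : ι → Matrix (Fin d) (Fin d) ℂ)
    (x : ι → Fin d → ℂ) {M : ℝ} (hx : ∀ k ∈ s, ‖WithLp.toLp 2 (x k)‖ ≤ M) :
    ‖WithLp.toLp 2 (∑ k ∈ s, B k *ᵥ x k)‖ ≤ (∑ k ∈ s, specNormC (B k)) * M := by
  rw [WithLp.toLp_sum, Finset.sum_mul]
  refine (norm_sum_le _ _).trans (Finset.sum_le_sum fun k hk => ?_)
  exact (norm_toLp_mulVec_le_specNormC _ _).trans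
    (mul_le_mul_of_nonneg_left (hx k hk) (norm_nonneg _))

lemma inv_specNormC_inv_le_of_norm_mulVec_le {d : ℕ} {A : Matrix (Fin d) (Fin d) ℂ}
    {x : Fin d → ℂ} (hx : x ≠ 0) {r : ℝ}
    (hAx : ‖WithLp.toLp 2 (A *ᵥ x)‖ ≤ r * ‖WithLp.toLp 2 x‖) :
    (specNormC A⁻¹)⁻¹ ≤ r := by
  have hx_pos : 0 < ‖WithLp.toLp 2 x‖ := norm_pos_iff.mpr (by simpa using hx)
  have hr : 0 ≤ r := nonneg_of_mul_nonneg_left ((norm_nonneg _).trans hAx) hx_pos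
  by_cases hA : IsUnit A.det
  · have hx_le : ‖WithLp.toLp 2 x‖ ≤ specNormC A⁻¹ * r * ‖WithLp.toLp 2 x‖ :=
      calc ‖WithLp.toLp 2 x‖ = ‖WithLp.toLp 2 (A⁻¹ *ᵥ (A *ᵥ x))‖ := by
            rw [mulVec_mulVec, nonsing_inv_mul _ hA, one_mulVec]
        _ ≤ specNormC A⁻¹ * ‖WithLp.toLp 2 (A *ᵥ x)‖ := norm_toLp_mulVec_le_specNormC _ _
        _ ≤ specNormC A⁻¹ * (r * ‖WithLp.toLp 2 x‖) :=
            mul_le_mul_of_nonneg_left hAx (norm_nonneg _)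
        _ = specNormC A⁻¹ * r * ‖WithLp.toLp 2 x‖ := by ring
    have hone : 1 ≤ specNormC A⁻¹ * r := by
      simpa using (le_mul_iff_one_le_left hx_pos).mp hx_le
    have hpos : 0 < specNormC A⁻¹ := pos_of_mul_pos_left (one_pos.trans_le hone) hr
    rw [inv_le_iff_one_le_mul₀' hpos]
    exact hone
  · have hzero : specNormC (0 : Matrix (Fin d) (Fin d) ℂ) = 0 := by
      simp [specNormC]
    rwa [nonsing_inv_apply_not_isUnit _ hA, hzero, _root_.inv_zero]

lemma exists_mulVec_eq_smul_of_mem_spectrum {K m : Type*} [Field K] [Fintype m] [DecidableEq m]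
    {S : Matrix m m K} {lam : K} (hlam : lam ∈ spectrum K S) :
    ∃ v : m → K, v ≠ 0 ∧ S *ᵥ v = lam • v := by
  rw [← spectrum_toLin', ← Module.End.hasEigenvalue_iff_mem_spectrum] at hlam
  obtain ⟨v, hv⟩ := hlam.exists_hasEigenvector
  exact ⟨v, hv.2, hv.apply_eq_smul⟩

/-- block Gershgorin, Feingold–Varga: every eigenvalue λ of a block
matrix satisfies ‖(Σᵢᵢ − λI)⁻¹‖⁻¹ ≤ ∑_{k≠i} ‖Σᵢₖ‖ for some block index i.
(If Σᵢᵢ − λI is singular, Lean's conventions make the LHS equal to 0.) -/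
theorem stmt2 {n d : ℕ} (S : Matrix (Fin n × Fin d) (Fin n × Fin d) ℂ) (lam : ℂ)
    (hlam : lam ∈ spectrum ℂ S) :
    ∃ i, (specNormC ((blk S i i - lam • 1)⁻¹))⁻¹ ≤ ∑ k ∈ univ \ {i}, specNormC (blk S i k) := by
  obtain ⟨v, hv0, hv⟩ := exists_mulVec_eq_smul_of_mem_spectrum hlam
  obtain ⟨p, hp⟩ := blkVec_ne_zero_of_ne_zero hv0
  obtain ⟨i, -, hi⟩ := Finset.exists_max_image univ (fun k => ‖WithLp.toLp 2 (blkVec v k)‖)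
    ⟨p, mem_univ p⟩
  have hvi : blkVec v i ≠ 0 := by
    have hpos := (norm_pos_iff.mpr (by simpa using hp)).trans_le (hi p (mem_univ p))
    simpa using hpos
  refine ⟨i, inv_specNormC_inv_le_of_norm_mulVec_le hvi ?_⟩
  rw [blk_sub_smul_one_mulVec_of_mulVec_eq_smul hv i, WithLp.toLp_neg, norm_neg]
  exact norm_toLp_sum_mulVec_le _ _ _ fun k _ => hi k (mem_univ k)
end

section
/- The scaled block matrix constructed as Σ_{i,j} = √(α_i α_j) Σ̃_{i,j} for i ≠ j (with Σ̃_{j,i} = Σ̃_{i,j}ᵀ) and SPD diagonal blocks Σ_{i,i}, using α_i as in the blockwise scaling construction, is symmetric positive definite. -/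
open Matrix Finset MeasureTheory Real

/-- The assembled block matrix: SPD diagonal blocks `D i` and scaled off-diagonal
blocks `√(αᵢαⱼ)·T i j`. -/
noncomputable def assembled {M d : ℕ} (D : Fin M → Matrix (Fin d) (Fin d) ℝ)
    (T : Fin M → Fin M → Matrix (Fin d) (Fin d) ℝ) (α : Fin M → ℝ) :
    Matrix (Fin M × Fin d) (Fin M × Fin d) ℝ :=
  fun p q =>
    if p.1 = q.1 then D p.1 p.2 q.2
    else Real.sqrt (α p.1 * α q.1) * T p.1 q.1 p.2 q.2

/-!
Write `cᵢ = ‖(D i)⁻¹‖⁻¹`, which bounds the quadratic form of `D i` from below on unit vectors, and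
`rᵢ` for the Euclidean norm of the `i`-th block of a vector `x`. Bounding the off-diagonal blocks
by their spectral norms gives `xᵀ Σ x ≥ ∑ cᵢ rᵢ² - ∑_{i ≠ j} √(αᵢ αⱼ) ‖T i j‖ rᵢ rⱼ`.
By AM–GM, `√(αᵢ αⱼ) rᵢ rⱼ ≤ (αᵢ rᵢ² + αⱼ rⱼ²) / 2`, and as `‖T j i‖ = ‖T i j‖` the off-diagonal
sum is at most `∑ αᵢ rᵢ² ∑_{j ≠ i} ‖T i j‖ ≤ ε ∑ cᵢ rᵢ²` by the choice of `αᵢ`.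
Hence `xᵀ Σ x ≥ (1 - ε) ∑ cᵢ rᵢ² > 0` for `x ≠ 0`.
-/

open scoped Matrix.Norms.L2Operator
open WithLp (toLp)

lemma specNorm_eq_l2_opNorm {d : ℕ} (A : Matrix (Fin d) (Fin d) ℝ) : specNorm A = ‖A‖ := rfl

namespace Matrix

section Quadratic

variable {n : Type*} [Fintype n]

lemma dotProduct_self_eq_norm_toLp_sq (x : n → ℝ) : x ⬝ᵥ x = ‖toLp 2 x‖ ^ 2 := by
  rw [EuclideanSpace.norm_sq_eq]
  simp [dotProduct, sq]

lemma abs_dotProduct_mulVec_le [DecidableEq n] (A : Matrix n n ℝ) (x y : n → ℝ) :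
    |x ⬝ᵥ A *ᵥ y| ≤ ‖A‖ * ‖toLp 2 x‖ * ‖toLp 2 y‖ := by
  have hinner : x ⬝ᵥ A *ᵥ y = inner ℝ (toLp 2 x) (toLp 2 (A *ᵥ y)) := by
    rw [EuclideanSpace.inner_toLp_toLp, star_trivial, dotProduct_comm]
  calc |x ⬝ᵥ A *ᵥ y| ≤ ‖toLp 2 x‖ * ‖toLp 2 (A *ᵥ y)‖ := hinner ▸ abs_real_inner_le_norm _ _
    _ ≤ ‖toLp 2 x‖ * (‖A‖ * ‖toLp 2 y‖) := by gcongr; exact l2_opNorm_mulVec A (toLp 2 y)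
    _ = ‖A‖ * ‖toLp 2 x‖ * ‖toLp 2 y‖ := by ring

lemma IsHermitian.dotProduct_mulVec_comm {P : Matrix n n ℝ} (hP : P.IsHermitian) (x y : n → ℝ) :
    y ⬝ᵥ P *ᵥ x = x ⬝ᵥ P *ᵥ y := by
  rw [dotProduct_mulVec, ← mulVec_transpose, ← conjTranspose_eq_transpose_of_trivial, hP.eq,
    dotProduct_comm]

lemma PosDef.inv_norm_inv_mul_norm_sq_le [DecidableEq n] {P : Matrix n n ℝ} (hP : P.PosDef)
    (x : n → ℝ) :
    ‖P⁻¹‖⁻¹ * ‖toLp 2 x‖ ^ 2 ≤ x ⬝ᵥ P *ᵥ x := by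
  set y := P⁻¹ *ᵥ x
  have hPy : P *ᵥ y = x := by
    rw [mulVec_mulVec, mul_nonsing_inv _ ((isUnit_iff_isUnit_det P).1 hP.isUnit), one_mulVec]
  have hxPy : x ⬝ᵥ P *ᵥ y = ‖toLp 2 x‖ ^ 2 := by rw [hPy, dotProduct_self_eq_norm_toLp_sq]
  have hyPy : y ⬝ᵥ P *ᵥ y ≤ ‖P⁻¹‖ * ‖toLp 2 x‖ ^ 2 := by
    rw [hPy, dotProduct_comm]
    linarith [le_of_abs_le (abs_dotProduct_mulVec_le P⁻¹ x x)]
  -- Cauchy–Schwarz for the form of `P`, applied to `x` and `P⁻¹ x`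
  have hCS := (toBilin' P).apply_mul_apply_le_of_forall_zero_le
    (fun v => by simpa [toBilin'_apply'] using hP.posSemidef.dotProduct_mulVec_nonneg v) x y
  simp only [toBilin'_apply', hP.isHermitian.dotProduct_mulVec_comm x y, hxPy] at hCS
  have hxPx : 0 ≤ x ⬝ᵥ P *ᵥ x := by simpa using hP.posSemidef.dotProduct_mulVec_nonneg x
  rcases (norm_nonneg P⁻¹).eq_or_lt with h0 | h0
  · simpa [← h0] using hxPx
  rcases (sq_nonneg ‖toLp 2 x‖).eq_or_lt with hx | hx
  · simpa [← hx] using hxPx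
  rw [inv_mul_le_iff₀ h0]
  nlinarith [mul_le_mul_of_nonneg_left hyPy hxPx]

lemma PosDef.norm_inv_pos [DecidableEq n] [Nonempty n] {P : Matrix n n ℝ} (hP : P.PosDef) :
    0 < ‖P⁻¹‖ :=
  norm_pos_iff.2 hP.inv.isUnit.ne_zero

end Quadratic

section Blocks

variable {M d : ℕ}

lemma dotProduct_mulVec_eq_sum_blk {R : Type*} [CommSemiring R]
    (A : Matrix (Fin M × Fin d) (Fin M × Fin d) R) (x : Fin M × Fin d → R) :
    x ⬝ᵥ A *ᵥ x = ∑ i, ∑ j, Function.curry x i ⬝ᵥ blk A i j *ᵥ Function.curry x j := by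
  simp only [dotProduct, mulVec, Fintype.sum_prod_type, Finset.mul_sum, blk, Function.curry]
  exact Finset.sum_congr rfl fun i _ => Finset.sum_comm

lemma sum_sub_sum_offDiag_le_dotProduct_mulVec (A : Matrix (Fin M × Fin d) (Fin M × Fin d) ℝ)
    (hdiag : ∀ i, (blk A i i).PosDef) (x : Fin M × Fin d → ℝ) :
    ∑ i, ‖(blk A i i)⁻¹‖⁻¹ * ‖toLp 2 (Function.curry x i)‖ ^ 2
      - ∑ i, ∑ j ∈ univ \ {i},
          ‖blk A i j‖ * ‖toLp 2 (Function.curry x i)‖ * ‖toLp 2 (Function.curry x j)‖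
      ≤ x ⬝ᵥ A *ᵥ x := by
  rw [dotProduct_mulVec_eq_sum_blk, ← Finset.sum_sub_distrib]
  refine Finset.sum_le_sum fun i _ => ?_
  rw [Finset.sum_eq_sum_sdiff_singleton_add (mem_univ i)]
  have hdiag_i := (hdiag i).inv_norm_inv_mul_norm_sq_le (Function.curry x i)
  have hoff : -∑ j ∈ univ \ {i},
        ‖blk A i j‖ * ‖toLp 2 (Function.curry x i)‖ * ‖toLp 2 (Function.curry x j)‖
      ≤ ∑ j ∈ univ \ {i}, Function.curry x i ⬝ᵥ blk A i j *ᵥ Function.curry x j := by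
    rw [← Finset.sum_neg_distrib]
    exact Finset.sum_le_sum fun j _ => neg_le_of_abs_le (abs_dotProduct_mulVec_le _ _ _)
  linarith

theorem posDef_of_sum_offDiag_le (A : Matrix (Fin M × Fin d) (Fin M × Fin d) ℝ)
    (hA : A.IsHermitian) (hdiag : ∀ i, (blk A i i).PosDef) {ε : ℝ} (hε : ε < 1)
    (hoff : ∀ r : Fin M → ℝ, 0 ≤ r →
      ∑ i, ∑ j ∈ univ \ {i}, ‖blk A i j‖ * r i * r j ≤ ε * ∑ i, ‖(blk A i i)⁻¹‖⁻¹ * r i ^ 2) :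
    A.PosDef := by
  refine .of_dotProduct_mulVec_pos hA fun x hx => ?_
  rw [star_trivial]
  set r : Fin M → ℝ := fun i => ‖toLp 2 (Function.curry x i)‖
  obtain ⟨⟨i, a⟩, hia⟩ := Function.ne_iff.1 hx
  have : Nonempty (Fin d) := ⟨a⟩
  have hri : 0 < r i := norm_pos_iff.2 fun h => hia (congrFun ((WithLp.toLp_eq_zero 2).1 h) a)
  have hdiag_pos : 0 < ∑ i, ‖(blk A i i)⁻¹‖⁻¹ * r i ^ 2 :=
    Finset.sum_pos' (fun j _ => by positivity)
      ⟨i, mem_univ i, mul_pos (inv_pos.2 (hdiag i).norm_inv_pos) (pow_pos hri 2)⟩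
  have hlower := sum_sub_sum_offDiag_le_dotProduct_mulVec A hdiag x
  have hupper := hoff r fun j => norm_nonneg _
  have hgap := mul_pos (sub_pos.2 hε) hdiag_pos
  linarith

end Blocks

end Matrix

lemma sum_offDiag_sqrt_mul_mul_le {ι : Type*} [Fintype ι] [DecidableEq ι] {t : ι → ι → ℝ}
    (ht : ∀ i j, 0 ≤ t i j) (ht_symm : ∀ i j, i ≠ j → t j i = t i j) {α c : ι → ℝ}
    (hα : ∀ i, 0 ≤ α i) {ε : ℝ} (hαt : ∀ i, α i * ∑ j ∈ univ \ {i}, t i j ≤ ε * c i)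
    (r : ι → ℝ) :
    ∑ i, ∑ j ∈ univ \ {i}, √(α i * α j) * t i j * r i * r j ≤ ε * ∑ i, c i * r i ^ 2 := by
  set w : ι → ℝ := fun i => α i * r i ^ 2
  have amgm : ∀ i j, √(α i * α j) * t i j * r i * r j ≤ t i j * w i / 2 + t i j * w j / 2 := by
    intro i j
    have hw (k : ι) : w k = (√(α k) * r k) ^ 2 := by rw [mul_pow, Real.sq_sqrt (hα k)]
    rw [Real.sqrt_mul (hα i), hw i, hw j]
    nlinarith [mul_nonneg (ht i j) (sq_nonneg (√(α i) * r i - √(α j) * r j))]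
  have swap : ∑ i, ∑ j ∈ univ \ {i}, t i j * w j / 2 = ∑ i, ∑ j ∈ univ \ {i}, t i j * w i / 2 := by
    rw [Finset.sum_comm' (t' := univ) (s' := fun j => univ \ {j}) (by simp [eq_comm])]
    refine Finset.sum_congr rfl fun i _ => Finset.sum_congr rfl fun j hj => ?_
    rw [ht_symm i j (by simpa [eq_comm] using hj)]
  calc ∑ i, ∑ j ∈ univ \ {i}, √(α i * α j) * t i j * r i * r j
      ≤ ∑ i, ∑ j ∈ univ \ {i}, (t i j * w i / 2 + t i j * w j / 2) :=
        Finset.sum_le_sum fun i _ => Finset.sum_le_sum fun j _ => amgm i j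
    _ = ∑ i, r i ^ 2 * (α i * ∑ j ∈ univ \ {i}, t i j) := by
        rw [Finset.sum_congr rfl fun i _ => Finset.sum_add_distrib, Finset.sum_add_distrib, swap,
          ← Finset.sum_add_distrib]
        refine Finset.sum_congr rfl fun i _ => ?_
        simp only [← Finset.sum_div, ← Finset.sum_mul, w]
        ring
    _ ≤ ∑ i, r i ^ 2 * (ε * c i) :=
        Finset.sum_le_sum fun i _ => mul_le_mul_of_nonneg_left (hαt i) (sq_nonneg _)
    _ = ε * ∑ i, c i * r i ^ 2 := by
        rw [Finset.mul_sum]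
        exact Finset.sum_congr rfl fun i _ => by ring

section Assembled

variable {M d : ℕ} (D : Fin M → Matrix (Fin d) (Fin d) ℝ)
  (T : Fin M → Fin M → Matrix (Fin d) (Fin d) ℝ) (α : Fin M → ℝ)

lemma blk_assembled_self (i : Fin M) : blk (assembled D T α) i i = D i := by
  ext a b
  simp [blk, assembled]

lemma blk_assembled_of_ne {i j : Fin M} (hij : i ≠ j) :
    blk (assembled D T α) i j = √(α i * α j) • T i j := by
  ext a b
  simp [blk, assembled, hij]

variable {D T} in
lemma isHermitian_assembled (hD : ∀ i, (D i).IsHermitian) (hT : ∀ i j, i ≠ j → T j i = (T i j)ᵀ) :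
    (assembled D T α).IsHermitian := by
  ext ⟨i, a⟩ ⟨j, b⟩
  by_cases hij : i = j
  · subst hij
    simpa [assembled] using (hD i).apply a b
  · simp [assembled, hij, Ne.symm hij, hT i j hij, mul_comm (α i)]

end Assembled

/-- the block matrix assembled from SPD diagonal blocks and the
blockwise-scaled off-diagonal blocks `Σᵢⱼ = √(αᵢαⱼ) Σ̃ᵢⱼ` (with the α's from the
blockwise scaling construction) is symmetric positive definite. -/
theorem stmt11 {M d : ℕ} (D : Fin M → Matrix (Fin d) (Fin d) ℝ)
    (T : Fin M → Fin M → Matrix (Fin d) (Fin d) ℝ)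
    (hD : ∀ i, (D i).PosDef) (hT : ∀ i j, i ≠ j → T j i = (T i j)ᵀ)
    (δ ε : ℝ) (hδ : 0 < δ) (hε : 0 < ε) (hε1 : ε < 1)
    (s α : Fin M → ℝ)
    (hs : ∀ i, s i = (∑ j ∈ univ \ {i}, specNorm (T i j)) + δ)
    (hα : ∀ i, α i = min 1 (ε * (specNorm ((D i)⁻¹))⁻¹ / s i)) :
    (assembled D T α).PosDef := by
  simp only [specNorm_eq_l2_opNorm] at hs hα
  have hs_pos (i : Fin M) : 0 < s i :=
    hs i ▸ add_pos_of_nonneg_of_pos (Finset.sum_nonneg fun _ _ => norm_nonneg _) hδ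
  have hα_nonneg (i : Fin M) : 0 ≤ α i :=
    hα i ▸ le_min zero_le_one (div_nonneg (mul_nonneg hε.le (by positivity)) (hs_pos i).le)
  have hα_row (i : Fin M) : α i * ∑ j ∈ univ \ {i}, ‖T i j‖ ≤ ε * ‖(D i)⁻¹‖⁻¹ := by
    have hαs : α i * s i ≤ ε * ‖(D i)⁻¹‖⁻¹ := (le_div_iff₀ (hs_pos i)).1 (hα i ▸ min_le_right _ _)
    nlinarith [hs i, hα_nonneg i]
  have hT_norm (i j : Fin M) (hij : i ≠ j) : ‖T j i‖ = ‖T i j‖ := by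
    rw [hT i j hij, ← conjTranspose_eq_transpose_of_trivial, l2_opNorm_conjTranspose]
  refine posDef_of_sum_offDiag_le _ (isHermitian_assembled α (fun i => (hD i).isHermitian) hT)
    (fun i => by rw [blk_assembled_self]; exact hD i) hε1 fun r _ => ?_
  calc ∑ i, ∑ j ∈ univ \ {i}, ‖blk (assembled D T α) i j‖ * r i * r j
      = ∑ i, ∑ j ∈ univ \ {i}, √(α i * α j) * ‖T i j‖ * r i * r j := by
        refine Finset.sum_congr rfl fun i _ => Finset.sum_congr rfl fun j hj => ?_
        rw [blk_assembled_of_ne D T α (by simpa [eq_comm] using hj), norm_smul,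
          Real.norm_of_nonneg (Real.sqrt_nonneg _)]
    _ ≤ ε * ∑ i, ‖(D i)⁻¹‖⁻¹ * r i ^ 2 :=
        sum_offDiag_sqrt_mul_mul_le (fun _ _ => norm_nonneg _) hT_norm hα_nonneg hα_row r
    _ = ε * ∑ i, ‖(blk (assembled D T α) i i)⁻¹‖⁻¹ * r i ^ 2 := by
        simp only [blk_assembled_self]
end

section
/- Strict block diagonal dominance of a Hermitian block matrix Σ with positive definite diagonal blocks implies all Gershgorin-type block intervals lie in the positive reals: every eigenvalue λ of Σ satisfies λ > σ_k − σ_min ≥ 0 for some diagonal block i, eigenvalue σ_k of Σ_{i,i}, and σ_min = λ_min(Σ_{i,i}); in particular λ ∈ (σ_k − σ_min, σ_k + σ_min) ⊂ (0, ∞). -/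
open Matrix Finset MeasureTheory Real
open scoped ComplexOrder

/-- The real points of the complex spectrum form the real spectrum. -/
lemma stmt16_aux_spec {d : ℕ} (B : Matrix (Fin d) (Fin d) ℂ) :
    {x : ℝ | (x : ℂ) ∈ spectrum ℂ B} = spectrum ℝ B := by
  ext x
  rw [Set.mem_setOf_eq, ← Complex.coe_algebraMap, spectrum.algebraMap_mem_iff]

/-- Operator norm bound for a block acting on a vector. -/
lemma stmt16_aux_opnorm {d : ℕ} (A : Matrix (Fin d) (Fin d) ℂ) (u : Fin d → ℂ) :
    ‖(WithLp.linearEquiv 2 ℂ (Fin d → ℂ)).symm (A *ᵥ u)‖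
      ≤ specNormC A * ‖(WithLp.linearEquiv 2 ℂ (Fin d → ℂ)).symm u‖ := by
  have h := (Matrix.toEuclideanLin A).toContinuousLinearMap.le_opNorm
    ((WithLp.linearEquiv 2 ℂ (Fin d → ℂ)).symm u)
  rw [LinearMap.coe_toContinuousLinearMap' (Matrix.toEuclideanLin A)] at h
  exact h

/-- Lower bound `c‖u‖ ≤ ‖(B − λ)u‖` when all eigenvalues of Hermitian `B` are at
distance at least `c` from `λ`. -/
lemma stmt16_aux_lower {d : ℕ} {B : Matrix (Fin d) (Fin d) ℂ} (hB : B.IsHermitian)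
    (lam c : ℝ) (hc : 0 ≤ c) (h : ∀ j, c ≤ |hB.eigenvalues j - lam|) (u : Fin d → ℂ) :
    c * ‖(WithLp.linearEquiv 2 ℂ (Fin d → ℂ)).symm u‖ ≤
      ‖(WithLp.linearEquiv 2 ℂ (Fin d → ℂ)).symm (B *ᵥ u - (lam : ℂ) • u)‖ := by
  set F := (WithLp.linearEquiv 2 ℂ (Fin d → ℂ)).symm with hF
  set x : EuclideanSpace ℂ (Fin d) := F u with hx
  set y : EuclideanSpace ℂ (Fin d) := F (B *ᵥ u - (lam : ℂ) • u) with hy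
  set b := hB.eigenvectorBasis with hb
  have hsymm : (Matrix.toEuclideanLin B).IsSymmetric :=
    Matrix.isHermitian_iff_isSymmetric.1 hB
  have hTx : Matrix.toEuclideanLin B x = F (B *ᵥ u) := rfl
  have key : ∀ j, b.repr y j = ((hB.eigenvalues j : ℂ) - lam) * b.repr x j := by
    intro j
    have hy' : y = Matrix.toEuclideanLin B x - (lam : ℂ) • x := by
      rw [hy, map_sub, _root_.map_smul, hTx]
    rw [b.repr_apply_apply, b.repr_apply_apply, hy', inner_sub_right, inner_smul_right]
    have hbj : Matrix.toEuclideanLin B (b j) = (hB.eigenvalues j : ℂ) • b j := by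
      have := hB.mulVec_eigenvectorBasis j
      apply (WithLp.equiv 2 (Fin d → ℂ)).injective
      rw [show (WithLp.equiv 2 (Fin d → ℂ)) (Matrix.toEuclideanLin B (b j)) = B *ᵥ (WithLp.equiv 2 (Fin d → ℂ)) (b j) from rfl]
      rw [show ((WithLp.equiv 2 (Fin d → ℂ)) (b j) : Fin d → ℂ) = ⇑(b j) from rfl]
      rw [this]
      rfl
    have h1 : (inner (𝕜 := ℂ) (b j) (Matrix.toEuclideanLin B x)) =
        (hB.eigenvalues j : ℂ) * inner (𝕜 := ℂ) (b j) x := by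
      rw [← hsymm (b j) x, hbj, inner_smul_left, Complex.conj_ofReal]
    rw [h1]; ring
  have hyn : ‖y‖ = Real.sqrt (∑ j, ‖b.repr y j‖ ^ 2) := by
    rw [← b.repr.norm_map y, EuclideanSpace.norm_eq]
  have hxn : ‖x‖ = Real.sqrt (∑ j, ‖b.repr x j‖ ^ 2) := by
    rw [← b.repr.norm_map x, EuclideanSpace.norm_eq]
  rw [hxn, hyn, ← Real.sqrt_sq hc, ← Real.sqrt_mul (sq_nonneg c)]
  apply Real.sqrt_le_sqrt
  rw [Finset.mul_sum]
  apply Finset.sum_le_sum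
  intro j _
  rw [key j, norm_mul]
  have heq : ‖((hB.eigenvalues j : ℂ) - lam)‖ = |hB.eigenvalues j - lam| := by
    rw [show ((hB.eigenvalues j : ℂ) - (lam : ℂ)) = ((hB.eigenvalues j - lam : ℝ) : ℂ) by
        push_cast; ring,
      Complex.norm_real, Real.norm_eq_abs]
  rw [heq, mul_pow]
  gcongr
  exact h j

/-- for a Hermitian block matrix with Hermitian positive definite
diagonal blocks satisfying block strict diagonal dominance in the spectral norm
(`λ_min(Σᵢᵢ) > ∑_{k≠i}‖Σᵢₖ‖`), every eigenvalue λ of Σ lies, for some block i and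
some eigenvalue σ of Σᵢᵢ, in the interval `(σ − λ_min(Σᵢᵢ), σ + λ_min(Σᵢᵢ))`, whose
left endpoint is nonnegative; in particular `λ > 0`. -/
theorem stmt16 {n d : ℕ} (S : Matrix (Fin n × Fin d) (Fin n × Fin d) ℂ)
    (hherm : S.IsHermitian)
    (hdiag : ∀ i, (blk S i i).PosDef)
    (hdom : ∀ i, ∑ k ∈ univ \ {i}, specNormC (blk S i k) < lamMinC (blk S i i))
    (lam : ℝ) (hlam : (lam : ℂ) ∈ spectrum ℂ S) :
    (∃ i, ∃ σ : ℝ, (σ : ℂ) ∈ spectrum ℂ (blk S i i) ∧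
        0 ≤ σ - lamMinC (blk S i i) ∧
        lam ∈ Set.Ioo (σ - lamMinC (blk S i i)) (σ + lamMinC (blk S i i)) ∧
        Set.Ioo (σ - lamMinC (blk S i i)) (σ + lamMinC (blk S i i)) ⊆ Set.Ioi (0 : ℝ)) ∧
      0 < lam := by
  classical
  -- extract an eigenvector
  have hnu : ¬ IsUnit ((algebraMap ℂ (Matrix (Fin n × Fin d) (Fin n × Fin d) ℂ)) (lam : ℂ) - S) :=
    spectrum.mem_iff.mp hlam
  have hdet : ((algebraMap ℂ (Matrix (Fin n × Fin d) (Fin n × Fin d) ℂ)) (lam : ℂ) - S).det = 0 := by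
    by_contra hd
    exact hnu ((Matrix.isUnit_iff_isUnit_det _).mpr (isUnit_iff_ne_zero.mpr hd))
  obtain ⟨v, hv0, hv⟩ := (Matrix.exists_mulVec_eq_zero_iff).mpr hdet
  have hSv : S *ᵥ v = (lam : ℂ) • v := by
    rw [Algebra.algebraMap_eq_smul_one, Matrix.sub_mulVec, Matrix.smul_mulVec,
      Matrix.one_mulVec, sub_eq_zero] at hv
    exact hv.symm
  -- block decomposition of v and choice of dominant block
  set u : Fin n → Fin d → ℂ := fun j a => v (j, a) with hu
  set N : Fin n → ℝ := fun j => ‖(WithLp.linearEquiv 2 ℂ (Fin d → ℂ)).symm (u j)‖ with hN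
  obtain ⟨p, hp⟩ := Function.ne_iff.mp hv0
  obtain ⟨i, -, hmax'⟩ := Finset.exists_max_image Finset.univ N ⟨p.1, Finset.mem_univ _⟩
  have hmax : ∀ j, N j ≤ N i := fun j => hmax' j (Finset.mem_univ _)
  have hNi : 0 < N i := by
    refine lt_of_lt_of_le ?_ (hmax p.1)
    have hup : u p.1 ≠ 0 := by
      intro h
      apply hp
      have := congrFun h p.2
      simpa [hu] using this
    have : (WithLp.linearEquiv 2 ℂ (Fin d → ℂ)).symm (u p.1) ≠ 0 := by
      simpa using hup
    simpa [hN] using norm_pos_iff.mpr this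
  have hBH : (blk S i i).IsHermitian := (hdiag i).1
  -- the key block equation
  have hkey : blk S i i *ᵥ u i - (lam : ℂ) • u i
      = - ∑ k ∈ univ \ {i}, (blk S i k) *ᵥ u k := by
    funext a
    have h1 : (S *ᵥ v) (i, a) = ((lam : ℂ) • v) (i, a) := congrFun hSv _
    have h2 : (S *ᵥ v) (i, a) = ∑ j, ((blk S i j) *ᵥ u j) a := by
      simp only [Matrix.mulVec, dotProduct]
      rw [Fintype.sum_prod_type]
      rfl
    rw [h2, Finset.sum_eq_sum_sdiff_singleton_add (Finset.mem_univ i)] at h1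
    have h3 : ((lam : ℂ) • v) (i, a) = (lam : ℂ) * u i a := rfl
    rw [h3] at h1
    have h4 : (- ∑ k ∈ univ \ {i}, (blk S i k) *ᵥ u k) a
        = - ∑ k ∈ univ \ {i}, ((blk S i k) *ᵥ u k) a := by
      simp
    rw [Pi.sub_apply, h4]
    have h5 : ((lam : ℂ) • u i) a = (lam : ℂ) * u i a := rfl
    rw [h5]
    linear_combination h1
  have hRL : ∑ k ∈ univ \ {i}, specNormC (blk S i k) < lamMinC (blk S i i) := hdom i
  have hR0 : 0 ≤ ∑ k ∈ univ \ {i}, specNormC (blk S i k) :=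
    Finset.sum_nonneg fun _ _ => norm_nonneg _
  have hL0 : 0 ≤ lamMinC (blk S i i) := le_trans hR0 hRL.le
  have hub : ‖(WithLp.linearEquiv 2 ℂ (Fin d → ℂ)).symm
      (blk S i i *ᵥ u i - (lam : ℂ) • u i)‖
      ≤ (∑ k ∈ univ \ {i}, specNormC (blk S i k)) * N i := by
    rw [hkey, map_neg, norm_neg, map_sum]
    refine le_trans (norm_sum_le _ _) ?_
    rw [Finset.sum_mul]
    refine Finset.sum_le_sum fun k _ => ?_
    refine le_trans (stmt16_aux_opnorm _ _) ?_
    exact mul_le_mul_of_nonneg_left (hmax k) (norm_nonneg _)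
  have hex : ∃ j, |hBH.eigenvalues j - lam| < lamMinC (blk S i i) := by
    by_contra hno
    push_neg at hno
    have hlow := stmt16_aux_lower hBH lam _ hL0 hno (u i)
    have hcomb : lamMinC (blk S i i) * N i
        ≤ (∑ k ∈ univ \ {i}, specNormC (blk S i k)) * N i := le_trans hlow hub
    have hle : lamMinC (blk S i i) ≤ ∑ k ∈ univ \ {i}, specNormC (blk S i k) :=
      le_of_mul_le_mul_right hcomb hNi
    exact absurd hRL (not_lt.mpr hle)
  obtain ⟨j, hj⟩ := hex
  have hσspec : ((hBH.eigenvalues j : ℝ) : ℂ) ∈ spectrum ℂ (blk S i i) := by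
    have h := hBH.eigenvalues_mem_spectrum_real j
    rw [← stmt16_aux_spec] at h
    exact h
  have hLσ : lamMinC (blk S i i) ≤ hBH.eigenvalues j := by
    unfold lamMinC
    rw [stmt16_aux_spec, hBH.spectrum_real_eq_range_eigenvalues]
    exact csInf_le (Set.Finite.bddBelow (Set.finite_range _)) ⟨j, rfl⟩
  have habs := abs_sub_lt_iff.mp hj
  obtain ⟨hab1, hab2⟩ := habs
  refine ⟨⟨i, hBH.eigenvalues j, hσspec, by linarith, ⟨by linarith, by linarith⟩,
    fun y hy => ?_⟩, by linarith⟩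
  have h0 : (0 : ℝ) ≤ hBH.eigenvalues j - lamMinC (blk S i i) := by linarith
  exact lt_of_le_of_lt h0 hy.1
end
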